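/- arXiv:2601.15880 — 4 statements merged into one kernel-verified Lean document; each statement's English description precedes it below -/
import Mathlib

section
/- Let (Ω,𝒜,P) be a probability space and p ≥ 1. For each m let C_m : Ω × ℝᵖ → ℝ be jointly measurable, twice continuously differentiable in the second argument for every ω, with gradient U_m(ω,β) = ∇_β C_m(ω,β) and Jacobian DU_m(ω,β) of U_m. Assume: (a) there is a twice continuously differentiable function f : ℝᵖ → ℝ such that for every β ∈ ℝᵖ, C_m(β) → f(β) in probability; (b) for every β ∈ ℝᵖ, U_m(β) → ∇f(β) in probability, and ∇f has a unique root β₀ ∈ ℝᵖ; (c) there is an open ball B centered at β₀ and a map Σ̌ from an open set containing B to the symmetric p×p real matrices, continuous at β₀, with Σ̌(β₀) positive definite, such that sup_{β∈B} ‖DU_m(β) + Σ̌(β)‖ → 0 in probability. Then P({ω : there exists β ∈ B with U_m(ω,β) = 0}) → 1, i.e., a root of the estimating equation U_m(β) = 0 exists with probability tending to one. -/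
/-!
Since `DU_m ≈ -Σ̌` uniformly on `B` and `Σ̌` is continuous at `β₀` with `Σ̌(β₀)` invertible, on
a small closed ball around `β₀` the map `U_m(ω, ·)` is approximated by the invertible linear map
`-Σ̌(β₀)`. The quantitative inverse function theorem then puts a root in that ball as soon as
`U_m(ω, β₀)` is small, and this happens with probability tending to one because
`U_m(β₀) → ∇f(β₀) = 0` in probability.
-/

open MeasureTheory ProbabilityTheory Filter Matrix Topology Metric
open scoped NNReal ENNReal

section RootStability

variable {E F : Type*} [NormedAddCommGroup E] [NormedSpace ℝ E] [CompleteSpace E]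
  [NormedAddCommGroup F] [NormedSpace ℝ F]

theorem exists_zero_mem_closedBall_of_norm_fderiv_sub_le {g : E → F} {g' : E → E →L[ℝ] F}
    {f' : E →L[ℝ] F} (f'symm : f'.NonlinearRightInverse) {a : E} {δ : ℝ} {c : ℝ≥0}
    (hδ : 0 ≤ δ) (hg : ∀ x ∈ closedBall a δ, HasFDerivAt g (g' x) x)
    (hg' : ∀ x ∈ closedBall a δ, ‖g' x - f'‖ ≤ c)
    (ha : ‖g a‖ ≤ ((f'symm.nnnorm : ℝ)⁻¹ - c) * δ) :
    ∃ x ∈ closedBall a δ, g x = 0 := by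
  have happrox : ApproximatesLinearOn g f' (closedBall a δ) c := fun x hx y hy => by
    simpa using (convex_closedBall a δ).norm_image_sub_le_of_norm_hasFDerivWithin_le'
      (fun z hz => (hg z hz).hasFDerivWithinAt) hg' hy hx
  exact happrox.surjOn_closedBall_of_nonlinearRightInverse f'symm hδ subset_rfl
    (by rwa [mem_closedBall, dist_zero_left])

theorem exists_forall_exists_zero_of_continuousAt [CompleteSpace F] {M : E → E →L[ℝ] F} {a : E}
    (hM : ContinuousAt M a) (hsurj : (M a).range = ⊤) {r : ℝ} (hr : 0 < r) :
    ∃ η > 0, ∃ c > 0, ∀ (g : E → F) (g' : E → E →L[ℝ] F),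
      (∀ x ∈ ball a r, HasFDerivAt g (g' x) x) → ‖g a‖ < η →
      (∀ x ∈ ball a r, ‖g' x - M x‖ < c) → ∃ x ∈ ball a r, g x = 0 := by
  set f'symm := (M a).nonlinearRightInverseOfSurjective hsurj
  set k : ℝ := (f'symm.nnnorm : ℝ)⁻¹
  have hk : 0 < k := inv_pos.2 ((M a).nonlinearRightInverseOfSurjective_nnnorm_pos hsurj)
  have hnear : ∀ᶠ x in 𝓝 a, ‖M x - M a‖ < k / 4 ∧ x ∈ ball a r :=
    (hM.eventually (ball_mem_nhds (M a) (show 0 < k / 4 by positivity))).and (ball_mem_nhds a hr)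
      |>.mono fun x hx => ⟨by simpa [dist_eq_norm] using hx.1, hx.2⟩
  obtain ⟨δ, hδ, hδsub⟩ := nhds_basis_closedBall.mem_iff.1 hnear
  refine ⟨k / 2 * δ, by positivity, k / 4, by positivity, fun g g' hg hga hg' => ?_⟩
  obtain ⟨x, hx, hgx⟩ := exists_zero_mem_closedBall_of_norm_fderiv_sub_le f'symm
    (c := (k / 2).toNNReal) hδ.le (fun x hx => hg x (hδsub hx).2)
    (fun x hx => by
      have h₁ := hg' x (hδsub hx).2
      have h₂ := (hδsub hx).1
      rw [Real.coe_toNNReal _ (by positivity)]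
      calc ‖g' x - M a‖ ≤ ‖g' x - M x‖ + ‖M x - M a‖ := norm_sub_le_norm_sub_add_norm_sub _ _ _
        _ ≤ k / 2 := by linarith)
    (by
      have := hga.le
      rw [Real.coe_toNNReal _ (by positivity)]
      linarith)
  exact ⟨x, (hδsub hx).2, hgx⟩

end RootStability

theorem continuous_toContinuousLinearMap_mulVecLin {m n : Type*} [Fintype m] [Fintype n] :
    Continuous fun S : Matrix m n ℝ => LinearMap.toContinuousLinearMap S.mulVecLin :=
  (LinearMap.toContinuousLinearMap.toLinearMap ∘ₗ mulVecBilin ℝ ℝ :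
    Matrix m n ℝ →ₗ[ℝ] (n → ℝ) →L[ℝ] (m → ℝ)).continuous_of_finiteDimensional

theorem tendsto_measure_one_of_compl_subset_union {Ω ι : Type*} [MeasurableSpace Ω]
    {μ : Measure Ω} [IsProbabilityMeasure μ] {l : Filter ι} {S A B : ι → Set Ω}
    (hS : ∀ i, (S i)ᶜ ⊆ A i ∪ B i) (hA : Tendsto (fun i => μ (A i)) l (𝓝 0))
    (hB : Tendsto (fun i => μ (B i)) l (𝓝 0)) :
    Tendsto (fun i => μ (S i)) l (𝓝 1) := by
  have hcompl : Tendsto (fun i => μ (S i)ᶜ) l (𝓝 0) :=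
    tendsto_of_tendsto_of_tendsto_of_le_of_le tendsto_const_nhds (by simpa using hA.add hB)
      (fun _ => bot_le) fun i => (measure_mono (hS i)).trans (measure_union_le _ _)
  have hlow : ∀ i, 1 - μ (S i)ᶜ ≤ μ (S i) := fun i =>
    tsub_le_iff_right.2 (by simpa using measure_univ_le_add_compl (μ := μ) (S i))
  exact tendsto_of_tendsto_of_tendsto_of_le_of_le
    (by simpa using ENNReal.Tendsto.sub tendsto_const_nhds hcompl (Or.inl ENNReal.one_ne_top))
    tendsto_const_nhds hlow fun _ => prob_le_one

theorem existence_of_GEE_root_general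
    {Ω : Type*} [MeasurableSpace Ω] (P : Measure Ω) [IsProbabilityMeasure P]
    (p : ℕ)
    -- U_m = ∇C_m is the gradient of C_m, with Jacobian DU_m
    (U : ℕ → Ω → (Fin p → ℝ) → (Fin p → ℝ))
    (DU : ℕ → Ω → (Fin p → ℝ) → ((Fin p → ℝ) →L[ℝ] (Fin p → ℝ)))
    (hDU : ∀ m ω β, HasFDerivAt (U m ω) (DU m ω β) β)
    -- (a) C_m(β) → f(β) in probability, f twice continuously differentiable
    (f : (Fin p → ℝ) → ℝ)
    -- (b) U_m(β) → ∇f(β) in probability, and ∇f has the unique root β₀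
    (hUconv : ∀ β, TendstoInMeasure P (fun m ω => U m ω β) atTop
      fun _ => fun i => fderiv ℝ f β (Pi.single i 1))
    (β₀ : Fin p → ℝ)
    (hβ₀root : fderiv ℝ f β₀ = 0)
    -- (c) uniform convergence of the Jacobians to -Σ̌ on a ball B around β₀
    (r : ℝ) (hr : 0 < r)
    (Sigc : (Fin p → ℝ) → Matrix (Fin p) (Fin p) ℝ)
    (hSigCont : ContinuousAt Sigc β₀)
    (hSigPos : (Sigc β₀).PosDef)
    (hUnif : ∀ ε > (0 : ℝ), Tendsto
      (fun m => P {ω | ∃ β ∈ Metric.ball β₀ r,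
        ε ≤ ‖DU m ω β + LinearMap.toContinuousLinearMap (Sigc β).mulVecLin‖})
      atTop (𝓝 0)) :
    -- (i) existence of a root with probability tending to one
    Tendsto (fun m => P {ω | ∃ β ∈ Metric.ball β₀ r, U m ω β = 0}) atTop (𝓝 1) := by
  set M := fun β => -LinearMap.toContinuousLinearMap (Sigc β).mulVecLin
  have hM : ContinuousAt M β₀ :=
    (continuous_toContinuousLinearMap_mulVecLin.continuousAt.comp hSigCont).neg
  have hsurj : (M β₀).range = ⊤ := LinearMap.range_eq_top.2 fun y => by
    obtain ⟨x, hx⟩ := mulVec_surjective_iff_isUnit.2 hSigPos.isUnit (-y)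
    exact ⟨x, by simp [M, hx]⟩
  obtain ⟨η, hη, c, hc, hroot⟩ := exists_forall_exists_zero_of_continuousAt hM hsurj hr
  have hgrad₀ : (fun i => fderiv ℝ f β₀ (Pi.single i 1)) = 0 := by
    ext i; simp [hβ₀root]
  refine tendsto_measure_one_of_compl_subset_union (fun m ω hω => ?_)
    (tendstoInMeasure_iff_dist.1 (hUconv β₀) η hη) (hUnif c hc)
  by_contra hgood
  simp only [Set.mem_union, Set.mem_ofPred_eq, not_or, not_le, not_exists, not_and, hgrad₀,
    dist_zero_right] at hgood
  exact hω (hroot (U m ω) (DU m ω) (fun x _ => hDU m ω x) hgood.1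
    fun x hx => by simpa [M, sub_neg_eq_add] using hgood.2 x hx)

/-- **Theorem 1 (i)**: a root of the pseudo-observation generalized estimating equation
`U_m(β) = 0` exists in the ball `B` with probability tending to one. -/
theorem existence_of_GEE_root
    {Ω : Type*} [MeasurableSpace Ω] (P : Measure Ω) [IsProbabilityMeasure P]
    (p : ℕ) (hp : 1 ≤ p)
    -- the objective functions C_m, jointly measurable and C² in β
    (C : ℕ → Ω → (Fin p → ℝ) → ℝ)
    (hCmeas : ∀ m, Measurable fun x : Ω × (Fin p → ℝ) => C m x.1 x.2)
    (hCsmooth : ∀ m ω, ContDiff ℝ 2 (C m ω))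
    -- U_m = ∇C_m is the gradient of C_m, with Jacobian DU_m
    (U : ℕ → Ω → (Fin p → ℝ) → (Fin p → ℝ))
    (hgrad : ∀ m ω β i, U m ω β i = fderiv ℝ (C m ω) β (Pi.single i 1))
    (DU : ℕ → Ω → (Fin p → ℝ) → ((Fin p → ℝ) →L[ℝ] (Fin p → ℝ)))
    (hDU : ∀ m ω β, HasFDerivAt (U m ω) (DU m ω β) β)
    -- (a) C_m(β) → f(β) in probability, f twice continuously differentiable
    (f : (Fin p → ℝ) → ℝ) (hf : ContDiff ℝ 2 f)
    (hCconv : ∀ β, TendstoInMeasure P (fun m ω => C m ω β) atTop fun _ => f β)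
    -- (b) U_m(β) → ∇f(β) in probability, and ∇f has the unique root β₀
    (hUconv : ∀ β, TendstoInMeasure P (fun m ω => U m ω β) atTop
      fun _ => fun i => fderiv ℝ f β (Pi.single i 1))
    (β₀ : Fin p → ℝ)
    (hβ₀root : fderiv ℝ f β₀ = 0)
    (hβ₀uniq : ∀ β, fderiv ℝ f β = 0 → β = β₀)
    -- (c) uniform convergence of the Jacobians to -Σ̌ on a ball B around β₀
    (r : ℝ) (hr : 0 < r)
    (Sigc : (Fin p → ℝ) → Matrix (Fin p) (Fin p) ℝ)
    (hSigSymm : ∀ β, (Sigc β).IsSymm)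
    (hSigCont : ContinuousAt Sigc β₀)
    (hSigPos : (Sigc β₀).PosDef)
    (hUnif : ∀ ε > (0 : ℝ), Tendsto
      (fun m => P {ω | ∃ β ∈ Metric.ball β₀ r,
        ε ≤ ‖DU m ω β + LinearMap.toContinuousLinearMap (Sigc β).mulVecLin‖})
      atTop (𝓝 0)) :
    -- (i) existence of a root with probability tending to one
    Tendsto (fun m => P {ω | ∃ β ∈ Metric.ball β₀ r, U m ω β = 0}) atTop (𝓝 1) :=
  existence_of_GEE_root_general P p U DU hDU f hUconv β₀ hβ₀root r hr Sigc hSigCont hSigPos hUnif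
end

section
/- Let T₁ and T₂ be independent real-valued random variables on a probability space such that P(T_j > t) = exp(−(t/λ_j)^k) for all t ≥ 0 and j = 1, 2, where λ₁, λ₂ > 0 are scale parameters and k > 0 is a common shape parameter (i.e., T₁ and T₂ are Weibull distributed with equal shape). Then for every τ > 0, P(min(T₁,τ) > min(T₂,τ)) = (1 − exp(−τ^k·(λ₁^{−k} + λ₂^{−k})))·λ₁^k/(λ₁^k + λ₂^k) = (1 − S₁(τ)S₂(τ))·λ₁^k/(λ₁^k + λ₂^k), where S_j(τ) = exp(−(τ/λ_j)^k). -/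
/-!
Almost surely `Tⱼ > 0`, and `Tⱼ ^ k` is exponential with rate `aⱼ = λⱼ ^ (-k)`.
Conditioning on `T₁`, `P(T₂ < min(T₁, τ)) = E[1 - exp(-a₂ · max(min(T₁, τ), 0) ^ k)]`; here the
continuity of the survival function of `T₂` matters, as it rules out atoms and so turns the given
`P(T₂ > t)` into `P(T₂ < t)`. The layer-cake formula with weight `a₂ e^{-a₂ u}` then gives
`∫₀^{τ^k} P(T₁ ^ k > u) a₂ e^{-a₂ u} du = ∫₀^{τ^k} a₂ e^{-(a₁ + a₂) u} du
  = a₂ / (a₁ + a₂) · (1 - e^{-(a₁ + a₂) τ^k})`.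
-/

open MeasureTheory ProbabilityTheory Set Real

namespace ProbabilityTheory

lemma cdf_eq_one_sub_measureReal_Ioi (μ : Measure ℝ) [IsProbabilityMeasure μ] (x : ℝ) :
    cdf μ x = 1 - μ.real (Ioi x) := by
  rw [cdf_eq_real, ← compl_Iic, probReal_compl_eq_one_sub measurableSet_Iic, sub_sub_cancel]

lemma measure_Iio_eq_ofReal_cdf (μ : Measure ℝ) [IsProbabilityMeasure μ] {x : ℝ}
    (h : ContinuousWithinAt (cdf μ) (Iic x) x) : μ (Iio x) = ENNReal.ofReal (cdf μ x) := by
  calc μ (Iio x) = (cdf μ).measure (Iio x) := by rw [measure_cdf]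
    _ = ENNReal.ofReal (cdf μ x) := by
      rw [StieltjesFunction.measure_Iio (cdf μ) (tendsto_cdf_atBot μ), sub_zero, h.leftLim_eq]

lemma IndepFun.measure_preimage_eq_lintegral {Ω β γ : Type*} [MeasurableSpace Ω]
    [MeasurableSpace β] [MeasurableSpace γ] {P : Measure Ω} [IsFiniteMeasure P]
    {X : Ω → β} {Y : Ω → γ} (hXY : IndepFun X Y P) (hX : Measurable X) (hY : Measurable Y)
    {s : Set (β × γ)} (hs : MeasurableSet s) :
    P ((fun ω ↦ (X ω, Y ω)) ⁻¹' s) = ∫⁻ x, P.map Y (Prod.mk x ⁻¹' s) ∂P.map X := by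
  rw [← Measure.map_apply (hX.prodMk hY) hs,
    (indepFun_iff_map_prod_eq_prod_map_map hX.aemeasurable hY.aemeasurable).1 hXY,
    Measure.prod_apply hs]

end ProbabilityTheory

lemma integral_mul_exp_neg_mul (a T : ℝ) :
    ∫ t in (0 : ℝ)..T, a * exp (-(a * t)) = 1 - exp (-(a * T)) := by
  rw [intervalIntegral.integral_eq_sub_of_hasDerivAt (fun t _ ↦ hasDerivAt_neg_exp_mul_exp)
    ((by fun_prop : Continuous fun t ↦ a * exp (-(a * t))).intervalIntegrable 0 T)]
  simp only [mul_zero, neg_zero, exp_zero]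
  ring

lemma setLIntegral_Ioo_mul_exp_neg_mul {a b T : ℝ} (ha : 0 ≤ a) (hb : 0 < b) (hT : 0 ≤ T) :
    ∫⁻ t in Ioo 0 T, ENNReal.ofReal (a * exp (-(b * t)))
      = ENNReal.ofReal (a / b * (1 - exp (-(b * T)))) := by
  have hcont : Continuous fun t ↦ a * exp (-(b * t)) := by fun_prop
  rw [setLIntegral_congr Ioo_ae_eq_Ioc, ← ofReal_integral_eq_lintegral_ofReal
    hcont.integrableOn_Ioc (Filter.Eventually.of_forall fun t ↦ by positivity),
    ← intervalIntegral.integral_of_le hT, ← integral_mul_exp_neg_mul b T,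
    ← intervalIntegral.integral_const_mul]
  congr 2 with t
  field_simp

lemma lintegral_one_sub_exp_neg_mul {α : Type*} [MeasurableSpace α] (ν : Measure α) {a : ℝ}
    (ha : 0 ≤ a) {f : α → ℝ} (hf : 0 ≤ f) (hfm : Measurable f) :
    ∫⁻ x, ENNReal.ofReal (1 - exp (-(a * f x))) ∂ν
      = ∫⁻ t in Ioi 0, ν {x | t < f x} * ENNReal.ofReal (a * exp (-(a * t))) := by
  have hcont : Continuous fun t ↦ a * exp (-(a * t)) := by fun_prop
  simp_rw [← integral_mul_exp_neg_mul]
  exact lintegral_comp_eq_lintegral_meas_lt_mul ν (Filter.Eventually.of_forall hf)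
    hfm.aemeasurable (fun t _ ↦ hcont.intervalIntegrable _ _)
    (Filter.Eventually.of_forall fun t ↦ by positivity)

lemma lt_rpow_max_min_iff {k τ t x : ℝ} (hk : 0 < k) (hτ : 0 ≤ τ) (ht : 0 < t) :
    t < max (min x τ) 0 ^ k ↔ t ^ k⁻¹ < x ∧ t < τ ^ k := by
  rw [← rpow_inv_lt_iff_of_pos ht.le (le_max_right _ _) hk, lt_max_iff, lt_min_iff,
    rpow_inv_lt_iff_of_pos ht.le hτ hk, or_iff_left (rpow_pos_of_pos ht _).not_gt]

def HasWeibullSurvival (μ : Measure ℝ) (lam k : ℝ) : Prop :=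
  ∀ t, 0 ≤ t → μ (Ioi t) = ENNReal.ofReal (exp (-((t / lam) ^ k)))

namespace HasWeibullSurvival

variable {μ : Measure ℝ} {lam k : ℝ}

lemma cdf_eq [IsProbabilityMeasure μ] (h : HasWeibullSurvival μ lam k) (hk : 0 < k) (x : ℝ) :
    cdf μ x = 1 - exp (-((max x 0 / lam) ^ k)) := by
  have hcdf : ∀ t, 0 ≤ t → cdf μ t = 1 - exp (-((t / lam) ^ k)) := fun t ht ↦ by
    rw [cdf_eq_one_sub_measureReal_Ioi, measureReal_def, h t ht,
      ENNReal.toReal_ofReal (exp_pos _).le]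
  rcases le_total 0 x with hx | hx
  · rw [max_eq_left hx, hcdf x hx]
  · have hcdf0 := hcdf 0 le_rfl
    rw [zero_div, zero_rpow hk.ne', neg_zero, exp_zero, sub_self] at hcdf0
    rw [max_eq_right hx, zero_div, zero_rpow hk.ne', neg_zero, exp_zero, sub_self]
    exact le_antisymm (hcdf0 ▸ monotone_cdf μ hx) (cdf_nonneg μ x)

lemma measure_Iio [IsProbabilityMeasure μ] (h : HasWeibullSurvival μ lam k) (hk : 0 < k) (x : ℝ) :
    μ (Iio x) = ENNReal.ofReal (1 - exp (-((max x 0 / lam) ^ k))) := by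
  have hcont : Continuous (cdf μ) := by
    rw [show ⇑(cdf μ) = _ from funext (h.cdf_eq hk)]
    have := continuous_rpow_const hk.le
    fun_prop
  rw [measure_Iio_eq_ofReal_cdf μ hcont.continuousWithinAt, h.cdf_eq hk]

lemma measure_Ioi_rpow_inv (h : HasWeibullSurvival μ lam k) (hlam : 0 ≤ lam) (hk : 0 < k)
    {t : ℝ} (ht : 0 ≤ t) : μ (Ioi (t ^ k⁻¹)) = ENNReal.ofReal (exp (-(lam ^ (-k) * t))) := by
  rw [h _ (rpow_nonneg ht _), div_rpow (rpow_nonneg ht _) hlam, rpow_inv_rpow ht hk.ne',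
    rpow_neg hlam, inv_mul_eq_div]

end HasWeibullSurvival

theorem HasWeibullSurvival.lintegral_measure_Iio_min {μ₁ μ₂ : Measure ℝ} [IsProbabilityMeasure μ₂]
    {lam₁ lam₂ k τ : ℝ} (h₁ : HasWeibullSurvival μ₁ lam₁ k) (h₂ : HasWeibullSurvival μ₂ lam₂ k)
    (hlam₁ : 0 < lam₁) (hlam₂ : 0 < lam₂) (hk : 0 < k) (hτ : 0 ≤ τ) :
    ∫⁻ x, μ₂ (Iio (min x τ)) ∂μ₁
      = ENNReal.ofReal ((1 - exp (-(τ ^ k * (lam₁ ^ (-k) + lam₂ ^ (-k)))))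
          * (lam₁ ^ k / (lam₁ ^ k + lam₂ ^ k))) := by
  set a₁ := lam₁ ^ (-k)
  set a₂ := lam₂ ^ (-k)
  have ha₁ : 0 < a₁ := rpow_pos_of_pos hlam₁ _
  have ha₂ : 0 < a₂ := rpow_pos_of_pos hlam₂ _
  have hinner (x : ℝ) :
      μ₂ (Iio (min x τ)) = ENNReal.ofReal (1 - exp (-(a₂ * max (min x τ) 0 ^ k))) := by
    rw [h₂.measure_Iio hk, div_rpow (le_max_right _ _) hlam₂.le, div_eq_inv_mul,
      ← rpow_neg hlam₂.le]
  have hlevel : ∀ t ∈ Ioi (0 : ℝ),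
      μ₁ {x | t < max (min x τ) 0 ^ k} * ENNReal.ofReal (a₂ * exp (-(a₂ * t)))
        = (Iio (τ ^ k)).indicator (fun t ↦ ENNReal.ofReal (a₂ * exp (-((a₁ + a₂) * t)))) t := by
    intro t ht
    by_cases htτ : t < τ ^ k
    · have hset : {x | t < max (min x τ) 0 ^ k} = Ioi (t ^ k⁻¹) := by
        ext x
        simp [lt_rpow_max_min_iff hk hτ ht, htτ]
      rw [hset, indicator_of_mem (mem_Iio.2 htτ), h₁.measure_Ioi_rpow_inv hlam₁.le hk ht.le,
        ← ENNReal.ofReal_mul (exp_pos _).le]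
      congr 1
      rw [add_mul, neg_add, exp_add]
      ring
    · simp [lt_rpow_max_min_iff hk hτ ht, htτ]
  calc ∫⁻ x, μ₂ (Iio (min x τ)) ∂μ₁
      = ∫⁻ x, ENNReal.ofReal (1 - exp (-(a₂ * max (min x τ) 0 ^ k))) ∂μ₁ := lintegral_congr hinner
    _ = ∫⁻ t in Ioi 0, μ₁ {x | t < max (min x τ) 0 ^ k} * ENNReal.ofReal (a₂ * exp (-(a₂ * t))) :=
      lintegral_one_sub_exp_neg_mul μ₁ ha₂.le (fun x ↦ by positivity) (by fun_prop)
    _ = ∫⁻ t in Ioi 0,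
          (Iio (τ ^ k)).indicator (fun t ↦ ENNReal.ofReal (a₂ * exp (-((a₁ + a₂) * t)))) t :=
      setLIntegral_congr_fun measurableSet_Ioi hlevel
    _ = ∫⁻ t in Ioo 0 (τ ^ k), ENNReal.ofReal (a₂ * exp (-((a₁ + a₂) * t))) := by
      rw [lintegral_indicator measurableSet_Iio, Measure.restrict_restrict measurableSet_Iio,
        Iio_inter_Ioi]
    _ = ENNReal.ofReal (a₂ / (a₁ + a₂) * (1 - exp (-((a₁ + a₂) * τ ^ k)))) :=
      setLIntegral_Ioo_mul_exp_neg_mul ha₂.le (by positivity) (rpow_nonneg hτ _)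
    _ = _ := by
      rw [mul_comm (a₁ + a₂), mul_comm (a₂ / _)]
      congr 2
      simp only [a₁, a₂, rpow_neg hlam₁.le, rpow_neg hlam₂.le]
      have := rpow_pos_of_pos hlam₁ k
      have := rpow_pos_of_pos hlam₂ k
      field_simp
      ring

/-- Closed-form expression for the τ-truncated relative treatment effect
`P(min(T₁,τ) > min(T₂,τ))` under independent Weibull event times with common shape `k`. -/
theorem truncated_relative_treatment_effect_weibull
    {Ω : Type*} [MeasurableSpace Ω] (P : Measure Ω) [IsProbabilityMeasure P]
    (T1 T2 : Ω → ℝ) (hT1 : Measurable T1) (hT2 : Measurable T2)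
    (hindep : ProbabilityTheory.IndepFun T1 T2 P)
    (lam1 lam2 k : ℝ) (hlam1 : 0 < lam1) (hlam2 : 0 < lam2) (hk : 0 < k)
    (hS1 : ∀ t : ℝ, 0 ≤ t → P {ω | t < T1 ω} = ENNReal.ofReal (Real.exp (-((t / lam1) ^ k))))
    (hS2 : ∀ t : ℝ, 0 ≤ t → P {ω | t < T2 ω} = ENNReal.ofReal (Real.exp (-((t / lam2) ^ k))))
    (τ : ℝ) (hτ : 0 < τ) :
    P {ω | min (T2 ω) τ < min (T1 ω) τ}
        = ENNReal.ofReal ((1 - Real.exp (-(τ ^ k * (lam1 ^ (-k) + lam2 ^ (-k)))))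
            * (lam1 ^ k / (lam1 ^ k + lam2 ^ k))) ∧
      P {ω | min (T2 ω) τ < min (T1 ω) τ}
        = ENNReal.ofReal ((1 - Real.exp (-((τ / lam1) ^ k)) * Real.exp (-((τ / lam2) ^ k)))
            * (lam1 ^ k / (lam1 ^ k + lam2 ^ k))) := by
  have hW1 : HasWeibullSurvival (P.map T1) lam1 k := fun t ht ↦ by
    rw [Measure.map_apply hT1 measurableSet_Ioi]
    exact hS1 t ht
  have hW2 : HasWeibullSurvival (P.map T2) lam2 k := fun t ht ↦ by
    rw [Measure.map_apply hT2 measurableSet_Ioi]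
    exact hS2 t ht
  have := Measure.isProbabilityMeasure_map (μ := P) hT2.aemeasurable
  have hevent : {ω | min (T2 ω) τ < min (T1 ω) τ}
      = (fun ω ↦ (T1 ω, T2 ω)) ⁻¹' {p | p.2 < min p.1 τ} := by
    ext ω
    change min (T2 ω) τ < min (T1 ω) τ ↔ T2 ω < min (T1 ω) τ
    rw [min_comm _ τ, min_comm _ τ, min_lt_min_right_iff, lt_min_iff, and_comm]
  have hP : P {ω | min (T2 ω) τ < min (T1 ω) τ} = ∫⁻ x, P.map T2 (Iio (min x τ)) ∂P.map T1 := by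
    rw [hevent]
    exact hindep.measure_preimage_eq_lintegral hT1 hT2
      (measurableSet_lt measurable_snd (measurable_fst.min measurable_const))
  rw [hW1.lintegral_measure_Iio_min hW2 hlam1 hlam2 hk hτ.le] at hP
  refine ⟨hP, hP.trans ?_⟩
  rw [← exp_add, div_rpow hτ.le hlam1.le, div_rpow hτ.le hlam2.le, rpow_neg hlam1.le,
    rpow_neg hlam2.le]
  ring_nf
end

section
/- Let T₁ and T₂ be independent real-valued random variables on a probability space and let τ ∈ ℝ. Then P(min(T₁,τ) = min(T₂,τ)) = P(T₁ ≥ τ)·P(T₂ ≥ τ) + Σ_{t < τ} P(T₁ = t)·P(T₂ = t), where the sum extends over all real t < τ and has at most countably many nonzero terms (interpreted as a tsum over {t ∈ ℝ : t < τ}). -/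
/-!
Truncated at `τ`, the two times tie exactly when both are censored (`τ ≤ T₁` and `τ ≤ T₂`) or
when they coincide strictly before `τ`, and these events are disjoint. Independence gives the
first probability as a product. For the second, the joint law is the product of the marginals,
so by Fubini it is `∫_{x < τ} P(T₂ = x) dP_{T₁}(x)`; the integrand vanishes off the countably many
atoms of `T₂`, which turns the integral into the sum `Σ_{t < τ} P(T₁ = t) P(T₂ = t)`.
-/

open MeasureTheory Set Function
open scoped ENNReal

theorem min_eq_min_iff {α : Type*} [LinearOrder α] {a b c : α} :
    min a c = min b c ↔ c ≤ a ∧ c ≤ b ∨ a = b ∧ a < c := by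
  simp only [min_def]
  split_ifs <;> grind

namespace MeasureTheory

variable {α : Type*} [MeasurableSpace α]

theorem Measure.countable_support_measure_singleton [MeasurableSingletonClass α] (μ : Measure α)
    [SFinite μ] : (support fun x ↦ μ {x}).Countable := by
  simpa [support, pos_iff_ne_zero] using Measure.countable_meas_level_set_pos (μ := μ) measurable_id

theorem lintegral_eq_tsum_of_countable_support [MeasurableSingletonClass α] (μ : Measure α)
    {f : α → ℝ≥0∞} (hf : (support f).Countable) : ∫⁻ x, f x ∂μ = ∑' x, f x * μ {x} := by
  rw [← setLIntegral_eq_of_support_subset subset_rfl, lintegral_countable f hf]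
  exact tsum_subtype_eq_of_support_subset (f := fun x ↦ f x * μ {x}) (support_mul_subset_left _ _)

theorem Measure.prod_apply_diagonal_inter_preimage_fst [MeasurableEq α] (μ ν : Measure α)
    [SFinite ν] {s : Set α} (hs : MeasurableSet s) :
    μ.prod ν (diagonal α ∩ Prod.fst ⁻¹' s) = ∑' x : s, μ {(x : α)} * ν {(x : α)} := by
  have hslice (x : α) :
      ν (Prod.mk x ⁻¹' (diagonal α ∩ Prod.fst ⁻¹' s)) = s.indicator (fun x ↦ ν {x}) x := by
    by_cases hx : x ∈ s <;> simp [hx, diagonal, preimage]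
  have hcount : (support (s.indicator fun x ↦ ν {x})).Countable :=
    ν.countable_support_measure_singleton.mono (by rw [support_indicator]; exact inter_subset_right)
  rw [Measure.prod_apply (measurableSet_diagonal.inter (measurable_fst hs)), funext hslice,
    lintegral_eq_tsum_of_countable_support μ hcount, tsum_subtype s fun x ↦ μ {x} * ν {x}]
  exact tsum_congr fun x ↦ by rw [indicator_mul_right, mul_comm]

end MeasureTheory

namespace ProbabilityTheory

theorem IndepFun.measure_setOf_eq_and_mem {Ω α : Type*} [MeasurableSpace Ω] [MeasurableSpace α]
    [MeasurableEq α] {P : Measure Ω} [IsFiniteMeasure P] {X Y : Ω → α} (hXY : IndepFun X Y P)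
    (hX : Measurable X) (hY : Measurable Y) {s : Set α} (hs : MeasurableSet s) :
    P {ω | X ω = Y ω ∧ X ω ∈ s} = ∑' x : s, P {ω | X ω = x} * P {ω | Y ω = x} := by
  have hmap : P.map (fun ω ↦ (X ω, Y ω)) = (P.map X).prod (P.map Y) :=
    (indepFun_iff_map_prod_eq_prod_map_map hX.aemeasurable hY.aemeasurable).1 hXY
  have hD : MeasurableSet (diagonal α ∩ Prod.fst ⁻¹' s) :=
    measurableSet_diagonal.inter (measurable_fst hs)
  calc P {ω | X ω = Y ω ∧ X ω ∈ s}
      = P.map (fun ω ↦ (X ω, Y ω)) (diagonal α ∩ Prod.fst ⁻¹' s) :=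
        (Measure.map_apply (hX.prodMk hY) hD).symm
    _ = ∑' x : s, P {ω | X ω = x} * P {ω | Y ω = x} := by
      rw [hmap, Measure.prod_apply_diagonal_inter_preimage_fst _ _ hs]
      simp only [Measure.map_apply hX (measurableSet_singleton _),
        Measure.map_apply hY (measurableSet_singleton _)]
      rfl

end ProbabilityTheory

/-- Decomposition of the tie probability of τ-truncated event times:
`P(min(T₁,τ) = min(T₂,τ)) = P(T₁ ≥ τ)P(T₂ ≥ τ) + Σ_{t<τ} P(T₁ = t)P(T₂ = t)`. -/
theorem tie_probability_decomposition
    {Ω : Type*} [MeasurableSpace Ω] (P : Measure Ω) [IsProbabilityMeasure P]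
    (T1 T2 : Ω → ℝ) (hT1 : Measurable T1) (hT2 : Measurable T2)
    (hindep : ProbabilityTheory.IndepFun T1 T2 P) (τ : ℝ) :
    P {ω | min (T1 ω) τ = min (T2 ω) τ}
      = P {ω | τ ≤ T1 ω} * P {ω | τ ≤ T2 ω}
        + ∑' t : {t : ℝ // t < τ}, P {ω | T1 ω = (t : ℝ)} * P {ω | T2 ω = (t : ℝ)} := by
  have hsplit : {ω | min (T1 ω) τ = min (T2 ω) τ}
      = (T1 ⁻¹' Ici τ ∩ T2 ⁻¹' Ici τ) ∪ {ω | T1 ω = T2 ω ∧ T1 ω ∈ Iio τ} := by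
    ext ω
    exact min_eq_min_iff
  have hdisj : Disjoint (T1 ⁻¹' Ici τ ∩ T2 ⁻¹' Ici τ) {ω | T1 ω = T2 ω ∧ T1 ω ∈ Iio τ} :=
    disjoint_left.2 fun ω h h' ↦ (mem_Iio.1 h'.2).not_ge (mem_Ici.1 h.1)
  rw [hsplit, measure_union hdisj ((measurableSet_eq_fun hT1 hT2).inter (hT1 measurableSet_Iio)),
    hindep.measure_inter_preimage_eq_mul _ _ measurableSet_Ici measurableSet_Ici,
    hindep.measure_setOf_eq_and_mem hT1 hT2 measurableSet_Iio]
  rfl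
end

section
/- Let p₁, p₂ ≥ 1. On a probability space let (Z_{1,i})_{i≥1} (values in ℝ^{p₁}) and (Z_{2,j})_{j≥1} (values in ℝ^{p₂}) be two mutually independent sequences, each consisting of i.i.d. random vectors, with E‖Z_{1,1}‖² < ∞ and E‖Z_{2,1}‖² < ∞. Write W_{ij} = (1, Z_{1,i}ᵀ, Z_{2,j}ᵀ)ᵀ ∈ ℝᵖ with p = 1+p₁+p₂, and for n₁, n₂ ≥ 1 let Σ̂_{n₁,n₂} = (n₁n₂)⁻¹ Σ_{i=1}^{n₁} Σ_{j=1}^{n₂} W_{ij}W_{ij}ᵀ. Then, almost surely, Σ̂_{n₁,n₂} converges (entrywise) to Σ = E[W₁₁W₁₁ᵀ] as min(n₁,n₂) → ∞ (i.e., convergence holds along the product of the atTop filters in (n₁,n₂)); explicitly, Σ = [[1, E₁ᵀ, E₂ᵀ], [E₁, Σ₁ + E₁E₁ᵀ, E₁E₂ᵀ], [E₂, E₂E₁ᵀ, Σ₂ + E₂E₂ᵀ]] with E_j = E(Z_{j,1}) and Σ_j = var(Z_{j,1}). -/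
/-!
Every entry of `W_{ij} W_{ij}ᵀ` is a product `φ(Z_{1,i}) ψ(Z_{2,j})` of a function of the first
sample and a function of the second, so each entry of `Σ̂_{n₁,n₂}` is the product of a one-sample
average of `φ(Z_{1,i})` and one of `ψ(Z_{2,j})`. The strong law of large numbers applies to each
factor separately, and independence of the two samples identifies the product of the limits,
`E φ(Z_{1,1}) · E ψ(Z_{2,1})`, with the corresponding entry of `Σ = E[W₁₁ W₁₁ᵀ]`.
-/

open MeasureTheory ProbabilityTheory Filter Matrix Topology

/-- Index type for the stacked vector `(1, Z₁ᵀ, Z₂ᵀ)ᵀ ∈ ℝ^{1+p₁+p₂}`. -/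
abbrev CovIdx (p₁ p₂ : ℕ) : Type := Unit ⊕ (Fin p₁ ⊕ Fin p₂)

theorem Filter.Tendsto.sum_sum_mul_div_mul {𝕜 : Type*} [Field 𝕜] [TopologicalSpace 𝕜]
    [ContinuousMul 𝕜] {l₁ l₂ : Filter ℕ} {f g : ℕ → 𝕜} {a b : 𝕜}
    (hf : Tendsto (fun n => (∑ i ∈ Finset.range n, f i) / n) l₁ (𝓝 a))
    (hg : Tendsto (fun n => (∑ j ∈ Finset.range n, g j) / n) l₂ (𝓝 b)) :
    Tendsto (fun n : ℕ × ℕ =>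
        (∑ i ∈ Finset.range n.1, ∑ j ∈ Finset.range n.2, f i * g j) / (n.1 * n.2))
      (l₁ ×ˢ l₂) (𝓝 (a * b)) := by
  refine ((hf.comp tendsto_fst).mul (hg.comp tendsto_snd)).congr fun n => ?_
  simp only [Function.comp_apply, ← Finset.sum_mul_sum, mul_div_mul_comm]

section

variable {Ω E F ι : Type*} [MeasurableSpace Ω] [MeasurableSpace E] [MeasurableSpace F]
  {P : Measure Ω}

theorem MeasureTheory.MemLp.integrable_apply_mul_apply [Fintype ι] {X : Ω → ι → ℝ}
    (hX : MemLp X 2 P) (k l : ι) : Integrable (fun ω => X ω k * X ω l) P :=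
  (hX.eval k).integrable_mul (hX.eval l)

theorem integral_mul_eq_covariance_add_mul [IsProbabilityMeasure P] {X Y : Ω → ℝ}
    (hX : MemLp X 2 P) (hY : MemLp Y 2 P) :
    ∫ ω, X ω * Y ω ∂P = cov[X, Y; P] + P[X] * P[Y] := by
  rw [covariance_eq_sub hX hY]
  simp

theorem strong_law_ae_comp {X : ℕ → Ω → E} (hindep : iIndepFun X P)
    (hident : ∀ i, IdentDistrib (X i) (X 0) P P) {φ : E → ℝ} (hφ : Measurable φ)
    (hint : Integrable (fun ω => φ (X 0 ω)) P) :
    ∀ᵐ ω ∂P, Tendsto (fun n : ℕ => (∑ i ∈ Finset.range n, φ (X i ω)) / n) atTop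
      (𝓝 (∫ ω, φ (X 0 ω) ∂P)) :=
  strong_law_ae_real (fun i => φ ∘ X i) hint
    (fun _ _ hij => (hindep.indepFun hij).comp hφ hφ) fun i => (hident i).comp hφ

theorem strong_law_ae_two_sample_mul {X : ℕ → Ω → E} {Y : ℕ → Ω → F}
    (hXindep : iIndepFun X P) (hXident : ∀ i, IdentDistrib (X i) (X 0) P P)
    (hYindep : iIndepFun Y P) (hYident : ∀ j, IdentDistrib (Y j) (Y 0) P P)
    {φ : E → ℝ} {ψ : F → ℝ} (hφ : Measurable φ) (hψ : Measurable ψ)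
    (hφint : Integrable (fun ω => φ (X 0 ω)) P) (hψint : Integrable (fun ω => ψ (Y 0 ω)) P) :
    ∀ᵐ ω ∂P, Tendsto (fun n : ℕ × ℕ =>
        (∑ i ∈ Finset.range n.1, ∑ j ∈ Finset.range n.2, φ (X i ω) * ψ (Y j ω)) / (n.1 * n.2))
      (atTop ×ˢ atTop) (𝓝 ((∫ ω, φ (X 0 ω) ∂P) * ∫ ω, ψ (Y 0 ω) ∂P)) := by
  filter_upwards [strong_law_ae_comp hXindep hXident hφ hφint,
    strong_law_ae_comp hYindep hYident hψ hψint] with ω hX hY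
  exact hX.sum_sum_mul_div_mul hY

variable [Fintype ι] {u : E → ι → ℝ} {v : F → ι → ℝ}

theorem ProbabilityTheory.IndepFun.integral_mul_apply_mul_mul_apply {X : Ω → E} {Y : Ω → F}
    (hXY : IndepFun X Y P) (hu : Measurable u) (hv : Measurable v)
    (huX : MemLp (fun ω => u (X ω)) 2 P) (hvY : MemLp (fun ω => v (Y ω)) 2 P) (k l : ι) :
    ∫ ω, (u (X ω) * v (Y ω)) k * (u (X ω) * v (Y ω)) l ∂P =
      (∫ ω, u (X ω) k * u (X ω) l ∂P) * ∫ ω, v (Y ω) k * v (Y ω) l ∂P := by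
  simp only [Pi.mul_apply, mul_mul_mul_comm _ (v (Y _) k)]
  exact (hXY.comp (φ := fun e => u e k * u e l) (ψ := fun f => v f k * v f l)
    (by fun_prop) (by fun_prop)).integral_fun_mul_eq_mul_integral
    (huX.integrable_apply_mul_apply k l).aestronglyMeasurable
    (hvY.integrable_apply_mul_apply k l).aestronglyMeasurable

theorem strong_law_ae_two_sample_second_moment {X : ℕ → Ω → E} {Y : ℕ → Ω → F}
    (hXindep : iIndepFun X P) (hXident : ∀ i, IdentDistrib (X i) (X 0) P P)
    (hYindep : iIndepFun Y P) (hYident : ∀ j, IdentDistrib (Y j) (Y 0) P P)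
    (hXY : IndepFun (X 0) (Y 0) P) (hu : Measurable u) (hv : Measurable v)
    (huX : MemLp (fun ω => u (X 0 ω)) 2 P) (hvY : MemLp (fun ω => v (Y 0 ω)) 2 P) :
    ∀ᵐ ω ∂P, ∀ k l, Tendsto (fun n : ℕ × ℕ =>
        (∑ i ∈ Finset.range n.1, ∑ j ∈ Finset.range n.2,
          (u (X i ω) * v (Y j ω)) k * (u (X i ω) * v (Y j ω)) l) / (n.1 * n.2))
      (atTop ×ˢ atTop)
      (𝓝 (∫ ω, (u (X 0 ω) * v (Y 0 ω)) k * (u (X 0 ω) * v (Y 0 ω)) l ∂P)) := by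
  have hentry k l :=
    strong_law_ae_two_sample_mul hXindep hXident hYindep hYident
      (φ := fun e => u e k * u e l) (ψ := fun f => v f k * v f l) (by fun_prop) (by fun_prop)
      (huX.integrable_apply_mul_apply k l) (hvY.integrable_apply_mul_apply k l)
  filter_upwards [ae_all_iff.2 fun k => ae_all_iff.2 (hentry k)] with ω hω k l
  rw [hXY.integral_mul_apply_mul_mul_apply hu hv huX hvY]
  simp only [Pi.mul_apply, mul_mul_mul_comm _ (v (Y _ _) k)]
  exact hω k l

end

namespace CovIdx

variable {p₁ p₂ : ℕ}

/-- Padding with ones rather than zeros makes the stacked vector `(1, z₁, z₂)` the pointwise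
product `padFst z₁ * padSnd z₂`. -/
def padFst (z : Fin p₁ → ℝ) : CovIdx p₁ p₂ → ℝ := Sum.elim 1 (Sum.elim z 1)

def padSnd (z : Fin p₂ → ℝ) : CovIdx p₁ p₂ → ℝ := Sum.elim 1 (Sum.elim 1 z)

theorem elim_one_elim_eq_padFst_mul_padSnd (z₁ : Fin p₁ → ℝ) (z₂ : Fin p₂ → ℝ) :
    Sum.elim (fun _ => (1 : ℝ)) (Sum.elim z₁ z₂) = padFst z₁ * padSnd z₂ := by
  ext (_ | _ | _) <;> simp [padFst, padSnd]

theorem measurable_padFst : Measurable (padFst : (Fin p₁ → ℝ) → CovIdx p₁ p₂ → ℝ) :=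
  measurable_pi_iff.2 <| by simp [Sum.forall, padFst, measurable_pi_apply]

theorem measurable_padSnd : Measurable (padSnd : (Fin p₂ → ℝ) → CovIdx p₁ p₂ → ℝ) :=
  measurable_pi_iff.2 <| by simp [Sum.forall, padSnd, measurable_pi_apply]

variable {Ω : Type*} [MeasurableSpace Ω] {P : Measure Ω} [IsFiniteMeasure P] {q : ENNReal}

theorem memLp_padFst {X : Ω → Fin p₁ → ℝ} (hX : MemLp X q P) :
    MemLp (fun ω => (padFst (X ω) : CovIdx p₁ p₂ → ℝ)) q P :=
  memLp_pi_iff.2 <| by simp [Sum.forall, padFst, hX.eval, memLp_const]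

theorem memLp_padSnd {X : Ω → Fin p₂ → ℝ} (hX : MemLp X q P) :
    MemLp (fun ω => (padSnd (X ω) : CovIdx p₁ p₂ → ℝ)) q P :=
  memLp_pi_iff.2 <| by simp [Sum.forall, padSnd, hX.eval, memLp_const]

end CovIdx

theorem empirical_second_moment_matrix_slln_general
    {Ω : Type*} [MeasurableSpace Ω] (P : Measure Ω) [IsProbabilityMeasure P]
    (p₁ p₂ : ℕ)
    -- the two mutually independent i.i.d. covariate sequences
    (Z1 : ℕ → Ω → Fin p₁ → ℝ) (Z2 : ℕ → Ω → Fin p₂ → ℝ)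
    (hZ1indep : iIndepFun Z1 P)
    (hZ2indep : iIndepFun Z2 P)
    (hindep : IndepFun (fun ω i => Z1 i ω) (fun ω j => Z2 j ω) P)
    (hZ1ident : ∀ i, IdentDistrib (Z1 i) (Z1 0) P P)
    (hZ2ident : ∀ j, IdentDistrib (Z2 j) (Z2 0) P P)
    -- square-integrable covariates
    (hZ1mom : MemLp (Z1 0) 2 P) (hZ2mom : MemLp (Z2 0) 2 P)
    -- stacked covariate vectors W_{ij} = (1, Z_{1,i}ᵀ, Z_{2,j}ᵀ)ᵀ
    (W : ℕ → ℕ → Ω → CovIdx p₁ p₂ → ℝ)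
    (hW : ∀ i j ω, W i j ω = Sum.elim (fun _ => (1 : ℝ)) (Sum.elim (Z1 i ω) (Z2 j ω)))
    -- the empirical second-moment matrices
    (Sighat : ℕ → ℕ → Ω → Matrix (CovIdx p₁ p₂) (CovIdx p₁ p₂) ℝ)
    (hSighat : ∀ n₁ n₂ ω k l, Sighat n₁ n₂ ω k l =
      ((n₁ : ℝ) * (n₂ : ℝ))⁻¹ *
        ∑ i ∈ Finset.range n₁, ∑ j ∈ Finset.range n₂, W i j ω k * W i j ω l)
    -- the population second-moment matrix Σ = E[W₁₁ W₁₁ᵀ]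
    (Sig : Matrix (CovIdx p₁ p₂) (CovIdx p₁ p₂) ℝ)
    (hSig : ∀ k l, Sig k l = ∫ ω, W 0 0 ω k * W 0 0 ω l ∂P)
    -- means and covariance matrices of the covariates
    (E1 : Fin p₁ → ℝ) (hE1 : ∀ a, E1 a = ∫ ω, Z1 0 ω a ∂P)
    (E2 : Fin p₂ → ℝ) (hE2 : ∀ b, E2 b = ∫ ω, Z2 0 ω b ∂P)
    (S1 : Matrix (Fin p₁) (Fin p₁) ℝ)
    (hS1 : ∀ a a', S1 a a' = ∫ ω, (Z1 0 ω a - E1 a) * (Z1 0 ω a' - E1 a') ∂P)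
    (S2 : Matrix (Fin p₂) (Fin p₂) ℝ)
    (hS2 : ∀ b b', S2 b b' = ∫ ω, (Z2 0 ω b - E2 b) * (Z2 0 ω b' - E2 b') ∂P) :
    -- (1) almost sure entrywise convergence as min(n₁,n₂) → ∞
    (∀ᵐ ω ∂P, ∀ k l, Tendsto (fun n : ℕ × ℕ => Sighat n.1 n.2 ω k l)
        (atTop ×ˢ atTop) (𝓝 (Sig k l))) ∧
    -- (2) explicit block form of Σ
      Sig = fromBlocks
        (Matrix.of fun _ _ => (1 : ℝ))
        (Matrix.of fun _ s => Sum.elim E1 E2 s)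
        (Matrix.of fun s _ => Sum.elim E1 E2 s)
        (fromBlocks (S1 + vecMulVec E1 E1) (vecMulVec E1 E2)
          (vecMulVec E2 E1) (S2 + vecMulVec E2 E2)) := by
  have hWpad i j ω : W i j ω = CovIdx.padFst (Z1 i ω) * CovIdx.padSnd (Z2 j ω) :=
    (hW i j ω).trans (CovIdx.elim_one_elim_eq_padFst_mul_padSnd _ _)
  have hZ0 : IndepFun (Z1 0) (Z2 0) P :=
    hindep.comp (measurable_pi_apply 0) (measurable_pi_apply 0)
  have hS1_eq a a' : ∫ ω, Z1 0 ω a * Z1 0 ω a' ∂P = S1 a a' + E1 a * E1 a' := by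
    rw [integral_mul_eq_covariance_add_mul (hZ1mom.eval a) (hZ1mom.eval a'), hS1, hE1, hE1]
    rfl
  have hS2_eq b b' : ∫ ω, Z2 0 ω b * Z2 0 ω b' ∂P = S2 b b' + E2 b * E2 b' := by
    rw [integral_mul_eq_covariance_add_mul (hZ2mom.eval b) (hZ2mom.eval b'), hS2, hE2, hE2]
    rfl
  refine ⟨?_, ?_⟩
  · filter_upwards [strong_law_ae_two_sample_second_moment hZ1indep hZ1ident hZ2indep hZ2ident
      hZ0 CovIdx.measurable_padFst CovIdx.measurable_padSnd (CovIdx.memLp_padFst hZ1mom)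
      (CovIdx.memLp_padSnd hZ2mom)] with ω hω k l
    simpa only [hSighat, hSig, hWpad, inv_mul_eq_div] using hω k l
  · ext k l
    simp only [hSig, hWpad]
    rw [hZ0.integral_mul_apply_mul_mul_apply CovIdx.measurable_padFst CovIdx.measurable_padSnd
      (CovIdx.memLp_padFst hZ1mom) (CovIdx.memLp_padSnd hZ2mom)]
    rcases k with _ | a | b <;> rcases l with _ | a' | b' <;>
      simp [CovIdx.padFst, CovIdx.padSnd, vecMulVec_apply, ← hE1, ← hE2, hS1_eq, hS2_eq, mul_comm]

/-- Strong law of large numbers for the empirical second-moment matrix `Σ̂` of the stacked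
covariate vectors: almost surely `Σ̂_{n₁,n₂} → Σ = E[W₁₁W₁₁ᵀ]` entrywise as `min(n₁,n₂) → ∞`,
and `Σ` has the explicit block form determined by `E₁, E₂, Σ₁, Σ₂`. -/
theorem empirical_second_moment_matrix_slln
    {Ω : Type*} [MeasurableSpace Ω] (P : Measure Ω) [IsProbabilityMeasure P]
    (p₁ p₂ : ℕ) (hp₁ : 1 ≤ p₁) (hp₂ : 1 ≤ p₂)
    -- the two mutually independent i.i.d. covariate sequences
    (Z1 : ℕ → Ω → Fin p₁ → ℝ) (Z2 : ℕ → Ω → Fin p₂ → ℝ)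
    (hZ1meas : ∀ i, Measurable (Z1 i)) (hZ2meas : ∀ j, Measurable (Z2 j))
    (hZ1indep : iIndepFun Z1 P)
    (hZ2indep : iIndepFun Z2 P)
    (hindep : IndepFun (fun ω i => Z1 i ω) (fun ω j => Z2 j ω) P)
    (hZ1ident : ∀ i, IdentDistrib (Z1 i) (Z1 0) P P)
    (hZ2ident : ∀ j, IdentDistrib (Z2 j) (Z2 0) P P)
    -- square-integrable covariates
    (hZ1mom : MemLp (Z1 0) 2 P) (hZ2mom : MemLp (Z2 0) 2 P)
    -- stacked covariate vectors W_{ij} = (1, Z_{1,i}ᵀ, Z_{2,j}ᵀ)ᵀ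
    (W : ℕ → ℕ → Ω → CovIdx p₁ p₂ → ℝ)
    (hW : ∀ i j ω, W i j ω = Sum.elim (fun _ => (1 : ℝ)) (Sum.elim (Z1 i ω) (Z2 j ω)))
    -- the empirical second-moment matrices
    (Sighat : ℕ → ℕ → Ω → Matrix (CovIdx p₁ p₂) (CovIdx p₁ p₂) ℝ)
    (hSighat : ∀ n₁ n₂ ω k l, Sighat n₁ n₂ ω k l =
      ((n₁ : ℝ) * (n₂ : ℝ))⁻¹ *
        ∑ i ∈ Finset.range n₁, ∑ j ∈ Finset.range n₂, W i j ω k * W i j ω l)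
    -- the population second-moment matrix Σ = E[W₁₁ W₁₁ᵀ]
    (Sig : Matrix (CovIdx p₁ p₂) (CovIdx p₁ p₂) ℝ)
    (hSig : ∀ k l, Sig k l = ∫ ω, W 0 0 ω k * W 0 0 ω l ∂P)
    -- means and covariance matrices of the covariates
    (E1 : Fin p₁ → ℝ) (hE1 : ∀ a, E1 a = ∫ ω, Z1 0 ω a ∂P)
    (E2 : Fin p₂ → ℝ) (hE2 : ∀ b, E2 b = ∫ ω, Z2 0 ω b ∂P)
    (S1 : Matrix (Fin p₁) (Fin p₁) ℝ)
    (hS1 : ∀ a a', S1 a a' = ∫ ω, (Z1 0 ω a - E1 a) * (Z1 0 ω a' - E1 a') ∂P)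
    (S2 : Matrix (Fin p₂) (Fin p₂) ℝ)
    (hS2 : ∀ b b', S2 b b' = ∫ ω, (Z2 0 ω b - E2 b) * (Z2 0 ω b' - E2 b') ∂P) :
    -- (1) almost sure entrywise convergence as min(n₁,n₂) → ∞
    (∀ᵐ ω ∂P, ∀ k l, Tendsto (fun n : ℕ × ℕ => Sighat n.1 n.2 ω k l)
        (atTop ×ˢ atTop) (𝓝 (Sig k l))) ∧
    -- (2) explicit block form of Σ
      Sig = fromBlocks
        (Matrix.of fun _ _ => (1 : ℝ))
        (Matrix.of fun _ s => Sum.elim E1 E2 s)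
        (Matrix.of fun s _ => Sum.elim E1 E2 s)
        (fromBlocks (S1 + vecMulVec E1 E1) (vecMulVec E1 E2)
          (vecMulVec E2 E1) (S2 + vecMulVec E2 E2)) :=
  empirical_second_moment_matrix_slln_general P p₁ p₂ Z1 Z2 hZ1indep hZ2indep hindep hZ1ident
    hZ2ident hZ1mom hZ2mom W hW Sighat hSighat Sig hSig E1 hE1 E2 hE2 S1 hS1 S2 hS2
end
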